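/- arXiv:2106.01509 — 4 statements merged into one kernel-verified Lean document; each statement's English description precedes it below -/
import Mathlib

section
/- Let d ≥ 1 be an integer and g ∈ ℂ^d a unit vector. The rank over ℂ of the Gram matrix G(g) equals the number of pairs (k,ℓ) ∈ (ℤ/dℤ)² for which ⟨g, M^k T^ℓ g⟩ ≠ 0. Consequently, G(g) has full rank d² if and only if ⟨g, M^k T^ℓ g⟩ ≠ 0 for all (k,ℓ) ∈ (ℤ/dℤ)². -/
/-!
`G(g)` is a convolution matrix on the group `(ℤ/dℤ)²`: its `(p, q)` entry is `|A(q - p)|²`,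
where `A(k, ℓ) = ⟨g, M^k T^ℓ g⟩` is the ambiguity function of `g`. The characters of the group
are eigenvectors of every convolution matrix, so the rank of `G(g)` is the number of characters on
which the Fourier transform of `|A|²` does not vanish. These characters are the symplectic ones
`(a, b) ↦ ω^(a y - b x)`, `(x, y) ∈ (ℤ/dℤ)²`, and the symplectic Fourier transform of `|A|²` is
`d · |A|²` itself (a Wiener–Khinchin computation), so it vanishes exactly where `A` does.
-/

open Complex Finset

noncomputable section

/-- `gw d` is the primitive `d`-th root of unity `ω = exp(2πi/d)`. -/
def gw (d : ℕ) : ℂ := Complex.exp (2 * Real.pi * Complex.I / d)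

/-- `modT d k l g = M^k T^ℓ g`, where `(Mg)_n = ω^n g_n` and `(Tg)_n = g_{n-1}`. -/
def modT (d : ℕ) (k l : ZMod d) (g : ZMod d → ℂ) : ZMod d → ℂ :=
  fun n => gw d ^ (k.val * n.val) * g (n - l)

/-- `inn d x y = ⟨x,y⟩ = Σ_n x_n conj(y_n)`. -/
def inn (d : ℕ) [NeZero d] (x y : ZMod d → ℂ) : ℂ :=
  ∑ n : ZMod d, x n * (starRingEnd ℂ) (y n)

/-- The `d² × d²` Gram matrix `G(g)` with entries `|⟨M^k T^ℓ g, M^{k'} T^{ℓ'} g⟩|²`. -/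
def Gmat (d : ℕ) [NeZero d] (g : ZMod d → ℂ) :
    Matrix (ZMod d × ZMod d) (ZMod d × ZMod d) ℂ :=
  fun p q =>
    ((‖inn d (modT d p.1 p.2 g) (modT d q.1 q.2 g)‖ ^ 2 : ℝ) : ℂ)

open scoped ComplexConjugate

namespace Matrix

theorem rank_eq_card_of_mulVec_basis {K n ι : Type*} [Field K] [Fintype n] [Fintype ι]
    (A : Matrix n n K) (b : Module.Basis ι K (n → K)) (μ : ι → K) (hμ : ∀ i, A *ᵥ b i = μ i • b i) :
    A.rank = Nat.card {i // μ i ≠ 0} := by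
  classical
  have hdiag : LinearMap.toMatrix b b (toLin' A) = diagonal μ := by
    ext i j
    rw [LinearMap.toMatrix_apply, toLin'_apply, hμ, map_smul, b.repr_self, diagonal_apply]
    by_cases h : i = j <;> simp [h]
  rw [Nat.card_eq_fintype_card, ← rank_diagonal, ← hdiag, rank_eq_finrank_range_toLin _ b b,
    toLin_toMatrix]
  rfl

variable {G : Type*} [AddCommGroup G] [Fintype G]

theorem circulant_mulVec_addChar {R : Type*} [CommRing R] (v : G → R) (ψ : AddChar G R) :
    circulant v *ᵥ ψ = (∑ k, v (-k) * ψ k) • ⇑ψ := by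
  ext i
  rw [mulVec, dotProduct, Pi.smul_apply, smul_eq_mul, Finset.sum_mul]
  refine (Fintype.sum_equiv (Equiv.addLeft i) _ _ fun k => ?_).symm
  simp only [Equiv.coe_addLeft, circulant_apply, sub_add_cancel_left, AddChar.map_add_eq_mul]
  ring

theorem rank_circulant (v : G → ℂ) :
    (circulant v).rank = Nat.card {ψ : AddChar G ℂ // ∑ k, v (-k) * ψ k ≠ 0} :=
  rank_eq_card_of_mulVec_basis _ (AddChar.complexBasis G) _ fun ψ => by
    rw [AddChar.complexBasis_apply, circulant_mulVec_addChar]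

end Matrix

namespace AddChar

section Symplectic

variable {R M : Type*} [CommRing R] [CommMonoid M]

def symplecticChar (ψ : AddChar R M) (p : R × R) : AddChar (R × R) M where
  toFun q := ψ (q.1 * p.2 - q.2 * p.1)
  map_zero_eq_one' := by simp
  map_add_eq_mul' q q' := by
    rw [← map_add_eq_mul]
    congr 1
    simp only [Prod.fst_add, Prod.snd_add]
    ring

@[simp]
theorem symplecticChar_apply (ψ : AddChar R M) (p q : R × R) :
    symplecticChar ψ p q = ψ (q.1 * p.2 - q.2 * p.1) := rfl

theorem symplecticChar_injective {ψ : AddChar R M} (hψ : ψ.IsPrimitive) :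
    Function.Injective (symplecticChar ψ) := by
  intro p p' h
  have h2 : ψ.mulShift p.2 = ψ.mulShift p'.2 := by
    ext t
    simpa [mul_comm] using DFunLike.congr_fun h (t, 0)
  have h1 : ψ.mulShift p.1 = ψ.mulShift p'.1 := by
    ext t
    simpa [mul_comm] using DFunLike.congr_fun h (0, -t)
  exact Prod.ext (to_mulShift_inj_of_isPrimitive hψ h1) (to_mulShift_inj_of_isPrimitive hψ h2)

theorem symplecticChar_bijective [Fintype R] {ψ : AddChar R ℂ} (hψ : ψ.IsPrimitive) :
    Function.Bijective (symplecticChar ψ) :=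
  (Fintype.bijective_iff_injective_and_card _).2 ⟨symplecticChar_injective hψ, card_eq.symm⟩

end Symplectic

section Ambiguity

variable {R : Type*} [CommRing R] [Fintype R] {ψ : AddChar R ℂ}

def ambiguity (ψ : AddChar R ℂ) (f : R → ℂ) (p : R × R) : ℂ :=
  ∑ n, ψ (-(p.1 * n)) * (f n * conj (f (n - p.2)))

theorem sum_mul_conj_fourier_mul (hψ : ψ.IsPrimitive) (f : R → ℂ) (y : R) :
    ∑ a, (∑ n, ψ (-(a * n)) * f n) * conj (∑ n, ψ (-(a * n)) * f n) * ψ (a * y)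
      = Fintype.card R * ∑ n, f n * conj (f (n - y)) := by
  classical
  have hexpand : ∀ a, (∑ n, ψ (-(a * n)) * f n) * conj (∑ n, ψ (-(a * n)) * f n) * ψ (a * y)
      = ∑ n, ∑ m, ψ (a * (m - n + y)) * (f n * conj (f m)) := by
    intro a
    simp_rw [map_sum, Finset.sum_mul_sum, Finset.sum_mul, map_mul, ← map_neg_eq_conj, neg_neg]
    refine Finset.sum_congr rfl fun n _ => Finset.sum_congr rfl fun m _ => ?_
    rw [show a * (m - n + y) = -(a * n) + a * m + a * y by ring, map_add_eq_mul, map_add_eq_mul]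
    ring
  rw [Finset.sum_congr rfl fun a _ => hexpand a, Finset.sum_comm, Finset.mul_sum]
  refine Finset.sum_congr rfl fun n _ => ?_
  rw [Finset.sum_comm]
  have horth : ∀ m, ∑ a, ψ (a * (m - n + y)) = if m = n - y then (Fintype.card R : ℂ) else 0 := by
    intro m
    have hiff : m - n + y = 0 ↔ m = n - y := by
      constructor <;> intro h <;> linear_combination h
    rw [sum_mulShift _ hψ, if_congr hiff rfl rfl]
    push_cast
    rfl
  simp_rw [← Finset.sum_mul, horth, ite_mul, zero_mul, Finset.sum_ite_eq', Finset.mem_univ, if_true]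

theorem ambiguity_mul_conj (f : R → ℂ) (x y : R) :
    ambiguity ψ f (x, y) * conj (ambiguity ψ f (x, y))
      = ∑ n, ∑ b, ψ (-(b * x)) *
          (f n * conj (f (n - b)) * conj (f (n - y) * conj (f (n - y - b)))) := by
  rw [ambiguity, map_sum, Finset.sum_mul_sum]
  refine Finset.sum_congr rfl fun n _ => ?_
  refine (Fintype.sum_equiv (Equiv.subLeft n) _ _ fun b => ?_).symm
  simp only [Equiv.subLeft_apply, map_mul, Complex.conj_conj, ← map_neg_eq_conj, neg_neg]
  rw [show -(b * x) = -(x * n) + x * (n - b) by ring, map_add_eq_mul,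
    show n - y - b = n - b - y by ring]
  ring

theorem sum_normSq_ambiguity_mul (hψ : ψ.IsPrimitive) (f : R → ℂ) (x y : R) :
    ∑ q : R × R, (‖ambiguity ψ f q‖ ^ 2 : ℂ) * ψ (q.1 * y - q.2 * x)
      = Fintype.card R * ‖ambiguity ψ f (x, y)‖ ^ 2 := by
  have hrow : ∀ b, ∑ a, (‖ambiguity ψ f (a, b)‖ ^ 2 : ℂ) * ψ (a * y)
      = Fintype.card R * ∑ n, f n * conj (f (n - b)) * conj (f (n - y) * conj (f (n - y - b))) := by
    intro b
    simp_rw [← Complex.mul_conj']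
    exact sum_mul_conj_fourier_mul hψ (fun n => f n * conj (f (n - b))) y
  calc ∑ q : R × R, (‖ambiguity ψ f q‖ ^ 2 : ℂ) * ψ (q.1 * y - q.2 * x)
      = ∑ b, ψ (-(b * x)) * ∑ a, (‖ambiguity ψ f (a, b)‖ ^ 2 : ℂ) * ψ (a * y) := by
        rw [Fintype.sum_prod_type_right]
        refine Finset.sum_congr rfl fun b _ => ?_
        rw [Finset.mul_sum]
        refine Finset.sum_congr rfl fun a _ => ?_
        rw [sub_eq_add_neg, map_add_eq_mul]
        ring
    _ = Fintype.card R * ∑ n, ∑ b, ψ (-(b * x)) *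
          (f n * conj (f (n - b)) * conj (f (n - y) * conj (f (n - y - b)))) := by
        simp_rw [hrow, Finset.mul_sum]
        rw [Finset.sum_comm]
        refine Finset.sum_congr rfl fun n _ => Finset.sum_congr rfl fun b _ => ?_
        ring
    _ = Fintype.card R * ‖ambiguity ψ f (x, y)‖ ^ 2 := by
        rw [← Complex.mul_conj', ambiguity_mul_conj]

theorem rank_circulant_normSq_ambiguity (hψ : ψ.IsPrimitive) (f : R → ℂ) :
    (Matrix.circulant fun q => (‖ambiguity ψ f (-q)‖ ^ 2 : ℂ)).rank
      = {p | ambiguity ψ f p ≠ 0}.ncard := by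
  have hcard : (Fintype.card R : ℂ) ≠ 0 := Nat.cast_ne_zero.2 Fintype.card_ne_zero
  rw [Matrix.rank_circulant, ← Nat.card_coe_set_eq]
  refine (Nat.card_congr (Equiv.subtypeEquiv (Equiv.ofBijective _ (symplecticChar_bijective hψ))
    fun p => ?_)).symm
  simp only [Equiv.ofBijective_apply, symplecticChar_apply, neg_neg, sum_normSq_ambiguity_mul hψ,
    Prod.mk.eta, ne_eq, mul_eq_zero, hcard, pow_eq_zero_iff two_ne_zero, ofReal_eq_zero,
    norm_eq_zero, false_or, Set.mem_ofPred_eq]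

end Ambiguity

end AddChar

section GramMatrix

open AddChar ZMod

variable {d : ℕ} [NeZero d]

theorem gw_pow (m : ℕ) : gw d ^ m = stdAddChar (m : ZMod d) := by
  rw [gw, ← Complex.exp_nat_mul, ← Int.cast_natCast (R := ZMod d), stdAddChar_coe]
  push_cast
  ring_nf

theorem modT_apply (k l : ZMod d) (g : ZMod d → ℂ) (n : ZMod d) :
    modT d k l g n = stdAddChar (k * n) * g (n - l) := by
  rw [modT, gw_pow, Nat.cast_mul, natCast_zmod_val, natCast_zmod_val]

theorem inn_modT (k l : ZMod d) (g : ZMod d → ℂ) :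
    inn d g (modT d k l g) = ambiguity stdAddChar g (k, l) := by
  refine Finset.sum_congr rfl fun n _ => ?_
  rw [modT_apply, map_mul, ← map_neg_eq_conj]
  ring

theorem inn_modT_modT (p q : ZMod d × ZMod d) (g : ZMod d → ℂ) :
    inn d (modT d p.1 p.2 g) (modT d q.1 q.2 g)
      = stdAddChar ((p.1 - q.1) * p.2) * ambiguity stdAddChar g (q - p) := by
  rw [ambiguity, Finset.mul_sum]
  refine (Fintype.sum_equiv (Equiv.addRight p.2) _ _ fun n => ?_).symm
  simp only [Equiv.coe_addRight, modT_apply, map_mul, ← map_neg_eq_conj, Prod.fst_sub, Prod.snd_sub]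
  rw [add_sub_cancel_right, show n + p.2 - q.2 = n - (q.2 - p.2) by ring]
  have hphase : stdAddChar ((p.1 - q.1) * p.2) * stdAddChar (-((q.1 - p.1) * n))
      = stdAddChar (p.1 * (n + p.2)) * stdAddChar (-(q.1 * (n + p.2))) := by
    rw [← map_add_eq_mul, ← map_add_eq_mul]
    ring_nf
  linear_combination (g n * conj (g (n - (q.2 - p.2)))) * hphase

theorem Gmat_eq_circulant (g : ZMod d → ℂ) :
    Gmat d g = Matrix.circulant fun q => (‖ambiguity stdAddChar g (-q)‖ ^ 2 : ℂ) := by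
  ext p q
  rw [Gmat, Matrix.circulant_apply, neg_sub, inn_modT_modT, norm_mul, AddChar.norm_apply, one_mul]
  push_cast
  rfl

end GramMatrix

theorem stmt2_general (d : ℕ) [NeZero d] (g : ZMod d → ℂ) :
    (Gmat d g).rank =
      {p : ZMod d × ZMod d | inn d g (modT d p.1 p.2 g) ≠ 0}.ncard ∧
    ((Gmat d g).rank = d ^ 2 ↔
      ∀ k l : ZMod d, inn d g (modT d k l g) ≠ 0) := by
  have hrank : (Gmat d g).rank
      = {p : ZMod d × ZMod d | inn d g (modT d p.1 p.2 g) ≠ 0}.ncard := by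
    simp only [inn_modT, Gmat_eq_circulant]
    exact AddChar.rank_circulant_normSq_ambiguity (ZMod.isPrimitive_stdAddChar d) g
  have hcard : Nat.card (ZMod d × ZMod d) = d ^ 2 := by
    rw [Nat.card_prod, Nat.card_zmod, sq]
  refine ⟨hrank, ?_⟩
  rw [hrank, ← hcard, ← Set.eq_univ_iff_ncard, Set.eq_univ_iff_forall, Prod.forall]
  rfl

/-- `rank G(g)` equals the number of pairs `(k,ℓ)` with
`⟨g, M^k T^ℓ g⟩ ≠ 0`; consequently `G(g)` has full rank `d²` iff
`⟨g, M^k T^ℓ g⟩ ≠ 0` for all `(k,ℓ)`. -/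
theorem stmt2 (d : ℕ) [NeZero d] (hd : 1 ≤ d) (g : ZMod d → ℂ)
    (hg : ∑ n : ZMod d, ‖g n‖ ^ 2 = 1) :
    (Gmat d g).rank =
      {p : ZMod d × ZMod d | inn d g (modT d p.1 p.2 g) ≠ 0}.ncard ∧
    ((Gmat d g).rank = d ^ 2 ↔
      ∀ k l : ZMod d, inn d g (modT d k l g) ≠ 0) :=
  stmt2_general d g
end
end

section
/- Let d ≥ 1 and let r be a positive divisor of d. Define the unit vector g ∈ ℂ^d by g_n = √(r/d) if r divides n (as an element of ℤ/dℤ represented in {0,…,d−1}) and g_n = 0 otherwise. Then rank(G(g)) = d, and the Gabor system {M^k T^ℓ g} is a 2-distance set: the set of values {|⟨M^k T^ℓ g, M^{k'} T^{ℓ'} g⟩| : (k,ℓ), (k',ℓ') ∈ (ℤ/dℤ)², (k,ℓ) ≠ (k',ℓ')} has at most 2 elements. -/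
open Complex Finset

noncomputable section

/-!
`g` is `√(r/d)` times the indicator of the subgroup `H = rℤ/dℤ`, of order `s = d/r`. Hence
`⟨M^k T^ℓ g, M^{k'} T^{ℓ'} g⟩` is `r/d` times the sum of the additive character
`n ↦ ω^{(k-k')n}` over the coset `ℓ + H`, provided `ℓ ≡ ℓ' mod r` (otherwise the two translates
have disjoint supports and it vanishes). The character sum over `H` is `s` or `0` according as the
character is trivial on `H`, i.e. `k ≡ k' mod s`. So every entry has modulus `1` or `0`, and `G(g)`
is the `0/1` matrix of the partition of `(ℤ/dℤ)²` by `(k mod s, ℓ mod r)`, whose rank is the number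
`s r = d` of blocks.
-/

open scoped Matrix

theorem Matrix.rank_of_ite_apply_eq_apply {ι κ K : Type*} [Fintype ι] [Fintype κ] [DecidableEq ι]
    [DecidableEq κ] [Field K] {Φ : ι → κ} (hΦ : Function.Surjective Φ) :
    (Matrix.of fun i j => if Φ i = Φ j then (1 : K) else 0).rank = Fintype.card κ := by
  let B : Matrix κ ι K := .of fun a i => if Φ i = a then 1 else 0
  let S : Matrix ι κ K := .of fun i a => if i = Function.surjInv hΦ a then 1 else 0
  have hG : (Matrix.of fun i j => if Φ i = Φ j then (1 : K) else 0) = Bᵀ * B := by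
    ext i j; simp [B, Matrix.mul_apply, eq_comm]
  have hBS : B * S = 1 := by
    ext a b; simp [B, S, Matrix.mul_apply, Matrix.one_apply, Function.surjInv_eq hΦ, eq_comm]
  have hSGS : Sᵀ * (Bᵀ * B) * S = 1 := by
    rw [← Matrix.mul_assoc, ← Matrix.transpose_mul, Matrix.mul_assoc, hBS, Matrix.transpose_one,
      Matrix.one_mul]
  rw [hG]
  refine le_antisymm ((Matrix.rank_mul_le_right _ _).trans (Matrix.rank_le_card_height B)) ?_
  calc Fintype.card κ = (Sᵀ * (Bᵀ * B) * S).rank := by rw [hSGS, Matrix.rank_one]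
    _ ≤ (Bᵀ * B).rank := (Matrix.rank_mul_le_left _ _).trans (Matrix.rank_mul_le_right _ _)

section
variable {G R : Type*} [AddCommGroup G] [Fintype G] [CommRing R]

open Classical in
theorem AddChar.sum_addSubgroup [IsDomain R] (ψ : AddChar G R) (H : AddSubgroup G) :
    ∑ h : H, ψ h = if ∀ h ∈ H, ψ h = 1 then (Nat.card H : R) else 0 := by
  rw [Nat.card_eq_fintype_card]
  convert (ψ.compAddMonoidHom H.subtype).sum_eq_ite using 2
  · rfl
  · rw [AddChar.eq_zero_iff]
    simp

theorem AddChar.sum_mul_ite_sub_mem_mul_ite_sub_mem (ψ : AddChar G R) (H : AddSubgroup G)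
    [DecidablePred (· ∈ H)] (a b : G) :
    ∑ n, ψ n * ((if n - a ∈ H then 1 else 0) * (if n - b ∈ H then 1 else 0)) =
      if a - b ∈ H then ψ a * ∑ h : H, ψ h else 0 := by
  split_ifs with hab
  · have hmem : ∀ n, n - b ∈ H ↔ n - a ∈ H := fun n => by
      rw [show n - b = n - a + (a - b) by abel]; exact H.add_mem_cancel_right hab
    calc ∑ n, ψ n * ((if n - a ∈ H then 1 else 0) * (if n - b ∈ H then 1 else 0))
        = ∑ h ∈ univ.filter (· ∈ H), ψ (h + a) := by
          rw [Finset.sum_filter]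
          exact (Fintype.sum_equiv (Equiv.addRight a) _ _ fun h => by
            by_cases hh : h ∈ H <;> simp [hh, hmem]).symm
      _ = ψ a * ∑ h : H, ψ h := by
          rw [Finset.sum_subtype (p := (· ∈ H)) (F := inferInstance) _ (by simp), Finset.mul_sum]
          simp [AddChar.map_add_eq_mul, mul_comm]
  · refine Finset.sum_eq_zero fun n _ => ?_
    have : ¬ (n - a ∈ H ∧ n - b ∈ H) := fun h =>
      hab (by simpa using H.sub_mem h.2 h.1)
    split_ifs <;> simp_all

end

theorem gw_pow_val_mul_val (d : ℕ) [NeZero d] (k n : ZMod d) :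
    gw d ^ (k.val * n.val) = ZMod.stdAddChar (k * n) := by
  have hkn : k * n = ((k.val * n.val : ℕ) : ZMod d) := by simp
  rw [hkn, ZMod.stdAddChar_apply, ZMod.toCircle_natCast, gw, ← Complex.exp_nat_mul]
  congr 1
  push_cast
  ring

theorem inn_modT_modT_s9 (d : ℕ) [NeZero d] (g : ZMod d → ℂ) (k l k' l' : ZMod d) :
    inn d (modT d k l g) (modT d k' l' g) =
      ∑ n, ZMod.stdAddChar ((k - k') * n) * (g (n - l) * starRingEnd ℂ (g (n - l'))) := by
  refine Finset.sum_congr rfl fun n _ => ?_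
  rw [modT, modT, gw_pow_val_mul_val, gw_pow_val_mul_val, map_mul (starRingEnd ℂ),
    ← AddChar.map_neg_eq_conj, sub_mul, AddChar.map_sub_eq_div, div_eq_mul_inv,
    ← AddChar.map_neg_eq_inv]
  ring

theorem ZMod.castHom_eq_zero_iff_dvd_val {d m : ℕ} [NeZero d] (h : m ∣ d) (n : ZMod d) :
    ZMod.castHom h (ZMod m) n = 0 ↔ m ∣ n.val := by
  rw [ZMod.castHom_apply, ZMod.cast_eq_val, ZMod.natCast_eq_zero_iff]

section
variable {r s : ℕ} [NeZero (r * s)]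

theorem ZMod.mem_zmultiples_natCast_iff (n : ZMod (r * s)) :
    n ∈ AddSubgroup.zmultiples (r : ZMod (r * s)) ↔ r ∣ n.val := by
  rw [← ZMod.castHom_eq_zero_iff_dvd_val (dvd_mul_right r s), AddSubgroup.mem_zmultiples_iff]
  constructor
  · rintro ⟨j, rfl⟩
    simp
  · rintro hn
    rw [ZMod.castHom_eq_zero_iff_dvd_val] at hn
    obtain ⟨j, hj⟩ := hn
    exact ⟨j, by rw [← ZMod.natCast_zmod_val n, hj]; simp [mul_comm]⟩

theorem ZMod.card_zmultiples_natCast :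
    Nat.card (AddSubgroup.zmultiples (r : ZMod (r * s))) = s := by
  have hr : r ≠ 0 := left_ne_zero_of_mul (NeZero.ne (r * s))
  rw [Nat.card_zmultiples, ZMod.addOrderOf_coe _ (NeZero.ne _), Nat.gcd_mul_right_left,
    Nat.mul_div_cancel_left _ (Nat.pos_of_ne_zero hr)]

theorem ZMod.mul_natCast_eq_zero_iff (m : ZMod (r * s)) :
    m * r = 0 ↔ ZMod.castHom (dvd_mul_left s r) (ZMod s) m = 0 := by
  have hr : 0 < r := Nat.pos_of_ne_zero (left_ne_zero_of_mul (NeZero.ne (r * s)))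
  rw [ZMod.castHom_eq_zero_iff_dvd_val, ← ZMod.natCast_zmod_val m, ← Nat.cast_mul,
    ZMod.natCast_eq_zero_iff, ZMod.natCast_zmod_val]
  simpa only [Nat.mul_comm r s] using Nat.mul_dvd_mul_iff_right hr

theorem ZMod.stdAddChar_mul_eq_one_on_zmultiples_iff (m : ZMod (r * s)) :
    (∀ h ∈ AddSubgroup.zmultiples (r : ZMod (r * s)), ZMod.stdAddChar (m * h) = 1) ↔
      ZMod.castHom (dvd_mul_left s r) (ZMod s) m = 0 := by
  rw [AddSubgroup.forall_mem_zmultiples, ← ZMod.mul_natCast_eq_zero_iff,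
    ← ZMod.injective_stdAddChar.eq_iff, AddChar.map_zero_eq_one]
  refine ⟨fun h => by simpa using h 1, fun h j => ?_⟩
  rw [mul_smul_comm, AddChar.map_zsmul_eq_zpow, h, one_zpow]

def gaborIndexClass (r s : ℕ) : ZMod (r * s) × ZMod (r * s) → ZMod s × ZMod r :=
  Prod.map (ZMod.castHom (dvd_mul_left s r) (ZMod s)) (ZMod.castHom (dvd_mul_right r s) (ZMod r))

theorem norm_inn_modT_modT_of_eq_indicator (g : ZMod (r * s) → ℂ)
    (hg : ∀ n : ZMod (r * s),
      g n = if r ∣ n.val then ((Real.sqrt ((r : ℝ) / ↑(r * s)) : ℝ) : ℂ) else 0)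
    (p q : ZMod (r * s) × ZMod (r * s)) :
    ‖inn (r * s) (modT (r * s) p.1 p.2 g) (modT (r * s) q.1 q.2 g)‖ =
      if gaborIndexClass r s p = gaborIndexClass r s q then 1 else 0 := by
  classical
  set H := AddSubgroup.zmultiples (r : ZMod (r * s))
  set c : ℝ := Real.sqrt ((r : ℝ) / ↑(r * s))
  have hg_ind : ∀ n, g n = c * if n ∈ H then 1 else 0 := fun n => by
    simp [hg, H, ZMod.mem_zmultiples_natCast_iff]
  have hinn : inn (r * s) (modT (r * s) p.1 p.2 g) (modT (r * s) q.1 q.2 g) =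
      (c : ℂ) ^ 2 * ∑ n, ZMod.stdAddChar.mulShift (p.1 - q.1) n *
        ((if n - p.2 ∈ H then 1 else 0) * (if n - q.2 ∈ H then 1 else 0)) := by
    rw [inn_modT_modT_s9, Finset.mul_sum]
    refine Finset.sum_congr rfl fun n _ => ?_
    rw [hg_ind, hg_ind, AddChar.mulShift_apply]
    split_ifs <;> simp [sq, mul_comm]
  have hcoset : p.2 - q.2 ∈ H ↔ ZMod.castHom (dvd_mul_right r s) (ZMod r) p.2 =
      ZMod.castHom (dvd_mul_right r s) (ZMod r) q.2 := by
    rw [ZMod.mem_zmultiples_natCast_iff, ← ZMod.castHom_eq_zero_iff_dvd_val, map_sub, sub_eq_zero]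
  have hnorm : ‖(c : ℂ) ^ 2‖ * Nat.card H = 1 := by
    rw [ZMod.card_zmultiples_natCast, norm_pow, Complex.norm_real,
      Real.norm_of_nonneg (Real.sqrt_nonneg _), Real.sq_sqrt (by positivity)]
    have : (s : ℝ) ≠ 0 := by exact_mod_cast right_ne_zero_of_mul (NeZero.ne (r * s))
    have : (r : ℝ) ≠ 0 := by exact_mod_cast left_ne_zero_of_mul (NeZero.ne (r * s))
    push_cast
    field_simp
  have hchar : (∀ h ∈ H, ZMod.stdAddChar.mulShift (p.1 - q.1) h = 1) ↔
      ZMod.castHom (dvd_mul_left s r) (ZMod s) p.1 =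
        ZMod.castHom (dvd_mul_left s r) (ZMod s) q.1 := by
    simp only [AddChar.mulShift_apply]
    rw [ZMod.stdAddChar_mul_eq_one_on_zmultiples_iff, map_sub, sub_eq_zero]
  rw [hinn, AddChar.sum_mul_ite_sub_mem_mul_ite_sub_mem, AddChar.sum_addSubgroup]
  simp only [hchar, hcoset, gaborIndexClass, Prod.map, Prod.ext_iff]
  split_ifs <;> simp_all [AddChar.norm_apply]
end

theorem stmt9_general (d : ℕ) [NeZero d] (r : ℕ) (hrd : r ∣ d)
    (g : ZMod d → ℂ)
    (hgdef : ∀ n : ZMod d,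
      g n = if r ∣ n.val then ((Real.sqrt ((r : ℝ) / d) : ℝ) : ℂ) else 0) :
    (Gmat d g).rank = d ∧
    ∃ s t : ℝ, ∀ p q : ZMod d × ZMod d, p ≠ q →
      ‖inn d (modT d p.1 p.2 g) (modT d q.1 q.2 g)‖ = s ∨
      ‖inn d (modT d p.1 p.2 g) (modT d q.1 q.2 g)‖ = t := by
  obtain ⟨s, rfl⟩ := hrd
  have : NeZero s := ⟨right_ne_zero_of_mul (NeZero.ne (r * s))⟩
  have : NeZero r := ⟨left_ne_zero_of_mul (NeZero.ne (r * s))⟩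
  have hnorm := norm_inn_modT_modT_of_eq_indicator g hgdef
  refine ⟨?_, 0, 1, fun p q _ => ?_⟩
  · have hG : Gmat (r * s) g =
        .of fun p q => if gaborIndexClass r s p = gaborIndexClass r s q then 1 else 0 := by
      ext p q
      rw [Gmat, Matrix.of_apply, hnorm]
      split_ifs <;> simp
    have hsurj : Function.Surjective (gaborIndexClass r s) :=
      (ZMod.castHom_surjective _).prodMap (ZMod.castHom_surjective _)
    rw [hG, Matrix.rank_of_ite_apply_eq_apply hsurj, Fintype.card_prod, ZMod.card, ZMod.card,
      mul_comm]
  · rw [hnorm]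
    split_ifs <;> simp

/-- for a positive divisor `r` of `d`, the normalized indicator
vector `g` of `{n : r ∣ n}` has `rank G(g) = d`, and the Gabor system
`{M^k T^ℓ g}` is a 2-distance set. -/
theorem stmt9 (d : ℕ) [NeZero d] (hd : 1 ≤ d) (r : ℕ) (hr : 0 < r) (hrd : r ∣ d)
    (g : ZMod d → ℂ)
    (hgdef : ∀ n : ZMod d,
      g n = if r ∣ n.val then ((Real.sqrt ((r : ℝ) / d) : ℝ) : ℂ) else 0) :
    (Gmat d g).rank = d ∧
    ∃ s t : ℝ, ∀ p q : ZMod d × ZMod d, p ≠ q →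
      ‖inn d (modT d p.1 p.2 g) (modT d q.1 q.2 g)‖ = s ∨
      ‖inn d (modT d p.1 p.2 g) (modT d q.1 q.2 g)‖ = t :=
  stmt9_general d r hrd g hgdef
end
end

section
/- Let d ≥ 1, let a, b, c be integers and κ an integer coprime to d, and define the complex subspace 𝒱(a,b,c,κ) = {g ∈ ℂ^d : g_{κi mod d} = ω^{a·C(i,2) + b·i + c}·g_i for all i = 0, 1, …, d−1}. Consider the orbits of the map i ↦ κ·i on ℤ/dℤ; an orbit Q is called orientable if Σ_{j ∈ Q} (a·C(j,2) + b·j + c) ≡ 0 mod d, where each j ∈ Q is represented in {0,…,d−1}. Then the dimension of 𝒱(a,b,c,κ) over ℂ equals the number of orientable orbits. -/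
open Complex Finset

noncomputable section

/-- The subspace `𝒱(a,b,c,κ) = {g : g_{κi} = ω^{a·C(i,2)+b·i+c}·g_i for all i}`. -/
def Vsub (d : ℕ) (a b c κ : ℤ) : Submodule ℂ (ZMod d → ℂ) where
  carrier := {g | ∀ i : ZMod d,
    g ((κ : ZMod d) * i) =
      gw d ^ (a * (i.val.choose 2 : ℤ) + b * (i.val : ℤ) + c) * g i}
  add_mem' := by
    intro x y hx hy i
    simp only [Pi.add_apply, hx i, hy i]
    ring
  zero_mem' := by intro i; simp
  smul_mem' := by
    intro r x hx i
    simp only [Pi.smul_apply, smul_eq_mul, hx i]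
    ring

/-- The `⟨κ⟩`-orbit of `i` in `ℤ/dℤ` under multiplication by `κ`. -/
def korbit (d : ℕ) (κ : ℤ) (i : ZMod d) : Set (ZMod d) :=
  {j : ZMod d | ∃ m : ℕ, j = (κ : ZMod d) ^ m * i}

/-- An orbit `Q` is orientable for `(a,b,c)` if
`Σ_{j ∈ Q} (a·C(j,2) + b·j + c) ≡ 0 mod d` (representatives in `{0,…,d-1}`). -/
def Orientable (d : ℕ) [NeZero d] (a b c : ℤ) (Q : Set (ZMod d)) : Prop :=
  (d : ℤ) ∣ ∑ j ∈ (Set.toFinite Q).toFinset,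
    (a * (j.val.choose 2 : ℤ) + b * (j.val : ℤ) + c)

namespace S12

set_option linter.unusedSectionVars false

variable {d : ℕ} [NeZero d] {a b c κ : ℤ}

lemma gw_prim (d : ℕ) [NeZero d] : IsPrimitiveRoot (gw d) d :=
  Complex.isPrimitiveRoot_exp d (NeZero.ne d)

lemma gw_ne_zero (d : ℕ) [NeZero d] : gw d ≠ 0 := Complex.exp_ne_zero _

lemma gw_zpow_eq_one_iff {z : ℤ} : gw d ^ z = 1 ↔ (d : ℤ) ∣ z :=
  (gw_prim d).zpow_eq_one_iff_dvd z

lemma isUnit_cast (hκ : IsCoprime κ (d : ℤ)) : IsUnit ((κ : ℤ) : ZMod d) := by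
  have h := hκ.map (Int.castRingHom (ZMod d))
  have h2 : (Int.castRingHom (ZMod d)) ((d:ℕ) : ℤ) = 0 := by simp
  rw [h2] at h
  exact (isCoprime_zero_right).mp h

/-- The weight `F a b c j = a·C(j,2)+b·j+c`. -/
def F (d : ℕ) [NeZero d] (a b c : ℤ) (j : ZMod d) : ℤ :=
  a * (j.val.choose 2 : ℤ) + b * (j.val : ℤ) + c

lemma iter_eq (κ : ℤ) (m : ℕ) (i : ZMod d) :
    (fun j => (κ : ZMod d) * j)^[m] i = (κ : ZMod d) ^ m * i := by
  induction m with
  | zero => simp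
  | succ k ih => rw [Function.iterate_succ_apply', ih, pow_succ]; ring

section unit
variable (hκ : IsUnit ((κ : ℤ) : ZMod d))

lemma cancel (hκ : IsUnit ((κ : ℤ) : ZMod d)) {m : ℕ} {x y : ZMod d}
    (h : (κ : ZMod d) ^ m * x = (κ : ZMod d) ^ m * y) : x = y :=
  (hκ.pow m).mul_left_cancel h

lemma pow_orderOf (hκ : IsUnit ((κ : ℤ) : ZMod d)) :
    (κ : ZMod d) ^ orderOf hκ.unit = 1 := by
  have : ((hκ.unit : (ZMod d)ˣ) : ZMod d) ^ orderOf hκ.unit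
      = (((hκ.unit ^ orderOf hκ.unit : (ZMod d)ˣ)) : ZMod d) := by
    rw [Units.val_pow_eq_pow_val]
  rw [hκ.unit_spec] at this
  rw [this, pow_orderOf_eq_one]
  rfl

lemma orderOf_pos' (hκ : IsUnit ((κ : ℤ) : ZMod d)) : 0 < orderOf hκ.unit :=
  orderOf_pos _

/-- minimal period of multiplication by κ at i -/
def np (κ : ℤ) (i : ZMod d) : ℕ :=
  Function.minimalPeriod (fun j => (κ : ZMod d) * j) i

lemma isPeriodic (hκ : IsUnit ((κ : ℤ) : ZMod d)) (i : ZMod d) :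
    Function.IsPeriodicPt (fun j => (κ : ZMod d) * j) (orderOf hκ.unit) i := by
  unfold Function.IsPeriodicPt Function.IsFixedPt
  rw [iter_eq, pow_orderOf hκ, one_mul]

lemma np_pos (hκ : IsUnit ((κ : ℤ) : ZMod d)) (i : ZMod d) : 0 < np κ i :=
  (isPeriodic hκ i).minimalPeriod_pos (orderOf_pos' hκ)

lemma pow_np (hκ : IsUnit ((κ : ℤ) : ZMod d)) (i : ZMod d) :
    (κ : ZMod d) ^ np κ i * i = i := by
  have h := Function.isPeriodicPt_minimalPeriod (fun j => (κ : ZMod d) * j) i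
  unfold Function.IsPeriodicPt Function.IsFixedPt at h
  rwa [iter_eq] at h

lemma np_dvd (hκ : IsUnit ((κ : ℤ) : ZMod d)) {i : ZMod d} {m : ℕ}
    (h : (κ : ZMod d) ^ m * i = i) : np κ i ∣ m := by
  apply Function.IsPeriodicPt.minimalPeriod_dvd
  unfold Function.IsPeriodicPt Function.IsFixedPt
  rwa [iter_eq]

lemma pow_mul_np (hκ : IsUnit ((κ : ℤ) : ZMod d)) (k : ℕ) (i : ZMod d) :
    (κ : ZMod d) ^ (k * np κ i) * i = i := by
  induction k with
  | zero => simp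
  | succ t ih =>
      rw [Nat.succ_mul, pow_add, mul_assoc, pow_np hκ, ih]

lemma orbit_toFinset (hκ : IsUnit ((κ : ℤ) : ZMod d)) (i : ZMod d) :
    (Set.toFinite (korbit d κ i)).toFinset
      = (Finset.range (np κ i)).image (fun m => (κ : ZMod d) ^ m * i) := by
  ext j
  simp only [Set.Finite.mem_toFinset, korbit, Set.mem_setOf_eq, Finset.mem_image,
    Finset.mem_range]
  constructor
  · rintro ⟨m, rfl⟩
    refine ⟨m % np κ i, Nat.mod_lt _ (np_pos hκ i), ?_⟩
    rw [← iter_eq, ← iter_eq]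
    unfold np
    exact Function.iterate_mod_minimalPeriod_eq
  · rintro ⟨m, _, rfl⟩
    exact ⟨m, rfl⟩

lemma orbit_sum (hκ : IsUnit ((κ : ℤ) : ZMod d)) (i : ZMod d) :
    ∑ j ∈ (Set.toFinite (korbit d κ i)).toFinset, F d a b c j
      = ∑ t ∈ Finset.range (np κ i), F d a b c ((κ : ZMod d) ^ t * i) := by
  rw [orbit_toFinset hκ, Finset.sum_image]
  intro s hs t ht h
  have := Function.iterate_injOn_Iio_minimalPeriod (f := fun j => (κ : ZMod d) * j) (x := i)
    (Set.mem_Iio.mpr (Finset.mem_range.mp hs)) (Set.mem_Iio.mpr (Finset.mem_range.mp ht))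
  apply this
  show (fun j => (κ : ZMod d) * j)^[s] i = (fun j => (κ : ZMod d) * j)^[t] i
  rw [iter_eq, iter_eq]
  exact h

lemma orientable_iff (hκ : IsUnit ((κ : ℤ) : ZMod d)) (i : ZMod d) :
    Orientable d a b c (korbit d κ i) ↔
      (d : ℤ) ∣ ∑ t ∈ Finset.range (np κ i), F d a b c ((κ : ZMod d) ^ t * i) := by
  unfold Orientable
  rw [← orbit_sum hκ]
  rfl

/-- the cocycle `W m i = ω^{Σ_{t<m} F(κ^t i)}`. -/
def W (d : ℕ) [NeZero d] (a b c κ : ℤ) (m : ℕ) (i : ZMod d) : ℂ :=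
  gw d ^ (∑ t ∈ Finset.range m, F d a b c ((κ : ZMod d) ^ t * i))

lemma W_zero (i : ZMod d) : W d a b c κ 0 i = 1 := by simp [W]

lemma W_succ (m : ℕ) (i : ZMod d) :
    W d a b c κ (m + 1) i
      = W d a b c κ m i * gw d ^ (F d a b c ((κ : ZMod d) ^ m * i)) := by
  rw [W, W, Finset.sum_range_succ, zpow_add₀ (gw_ne_zero d)]

lemma W_add (m m' : ℕ) (i : ZMod d) :
    W d a b c κ (m + m') i
      = W d a b c κ m i * W d a b c κ m' ((κ : ZMod d) ^ m * i) := by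
  induction m' with
  | zero => simp [W_zero]
  | succ k ih =>
      have h1 : m + (k + 1) = (m + k) + 1 := rfl
      have hp : (κ : ZMod d) ^ (m + k) * i = (κ : ZMod d) ^ k * ((κ : ZMod d) ^ m * i) := by
        rw [pow_add]; ring
      rw [h1, W_succ, ih, W_succ, mul_assoc, hp]

lemma W_n_eq_one (hκ : IsUnit ((κ : ℤ) : ZMod d)) {i : ZMod d}
    (h : Orientable d a b c (korbit d κ i)) : W d a b c κ (np κ i) i = 1 :=
  gw_zpow_eq_one_iff.mpr ((orientable_iff hκ i).mp h)

lemma W_mul_np (hκ : IsUnit ((κ : ℤ) : ZMod d)) {i : ZMod d}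
    (h : Orientable d a b c (korbit d κ i)) (k : ℕ) :
    W d a b c κ (k * np κ i) i = 1 := by
  induction k with
  | zero => simp [W_zero]
  | succ t ih =>
      rw [Nat.succ_mul, W_add, ih, one_mul, pow_mul_np hκ, W_n_eq_one hκ h]

lemma W_eq_of_eq (hκ : IsUnit ((κ : ℤ) : ZMod d)) {i : ZMod d}
    (h : Orientable d a b c (korbit d κ i)) {m m' : ℕ}
    (he : (κ : ZMod d) ^ m * i = (κ : ZMod d) ^ m' * i) :
    W d a b c κ m i = W d a b c κ m' i := by
  -- WLOG via an auxiliary claim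
  suffices H : ∀ m m' : ℕ, m ≤ m' → (κ : ZMod d) ^ m * i = (κ : ZMod d) ^ m' * i →
      W d a b c κ m i = W d a b c κ m' i by
    rcases le_total m m' with hle | hle
    · exact H m m' hle he
    · exact (H m' m hle he.symm).symm
  intro m m' hle he
  obtain ⟨s, rfl⟩ : ∃ s, m' = s + m := ⟨m' - m, by omega⟩
  have hfix : (κ : ZMod d) ^ s * i = i := by
    apply cancel hκ (m := m)
    have : (κ : ZMod d) ^ (s + m) * i = (κ : ZMod d) ^ s * ((κ : ZMod d) ^ m * i) := by
      rw [pow_add, mul_assoc]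
    rw [this] at he
    rw [mul_left_comm] at he
    rw [← he]
  obtain ⟨k, hk⟩ := np_dvd hκ hfix
  rw [W_add, hfix]
  rw [hk, mul_comm (np κ i) k, W_mul_np hκ h, one_mul]

lemma Vsub_iter {g : ZMod d → ℂ} (hg : g ∈ Vsub d a b c κ) (m : ℕ) (i : ZMod d) :
    g ((κ : ZMod d) ^ m * i) = W d a b c κ m i * g i := by
  induction m with
  | zero => simp [W_zero]
  | succ k ih =>
      have h1 : (κ : ZMod d) ^ (k + 1) * i = (κ : ZMod d) * ((κ : ZMod d) ^ k * i) := by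
        rw [pow_succ]; ring
      rw [h1, hg ((κ : ZMod d) ^ k * i), ih, W_succ]
      unfold F
      ring

lemma korbit_self_mem (i : ZMod d) : i ∈ korbit d κ i := ⟨0, by simp⟩

lemma korbit_pow_mul (hκ : IsUnit ((κ : ℤ) : ZMod d)) (m : ℕ) (i : ZMod d) :
    korbit d κ ((κ : ZMod d) ^ m * i) = korbit d κ i := by
  have hN := orderOf_pos' hκ
  ext j
  constructor
  · rintro ⟨s, rfl⟩
    exact ⟨s + m, by rw [pow_add, mul_assoc]⟩
  · rintro ⟨t, rfl⟩
    refine ⟨t + m * (orderOf hκ.unit - 1), ?_⟩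
    have harith : t + m * (orderOf hκ.unit - 1) + m = t + m * orderOf hκ.unit := by
      have h1 : 1 ≤ orderOf hκ.unit := hN
      cases' Nat.exists_eq_add_of_le h1 with r hr
      rw [hr]; simp; ring
    rw [← mul_assoc, ← pow_add, harith, pow_add, mul_assoc]
    congr 1
    have hone : ((κ : ZMod d) ^ m) ^ orderOf hκ.unit = 1 := by
      rw [← pow_mul, mul_comm, pow_mul, pow_orderOf hκ, one_pow]
    rw [pow_mul, hone, one_mul]

end unit

open Classical in
/-- a representative of an orbit -/
def rep (d : ℕ) (κ : ℤ) (Q : Set (ZMod d)) : ZMod d :=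
  if h : ∃ j, korbit d κ j = Q then h.choose else 0

lemma rep_spec {Q : Set (ZMod d)} (h : ∃ j, korbit d κ j = Q) :
    korbit d κ (rep d κ Q) = Q := by
  rw [rep, dif_pos h]
  exact h.choose_spec

lemma rep_orbit (i : ZMod d) :
    korbit d κ (rep d κ (korbit d κ i)) = korbit d κ i := rep_spec ⟨i, rfl⟩

lemma exists_pow (i : ZMod d) :
    ∃ m : ℕ, (κ : ZMod d) ^ m * rep d κ (korbit d κ i) = i := by
  have h : i ∈ korbit d κ (rep d κ (korbit d κ i)) := by
    rw [rep_orbit]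
    exact korbit_self_mem i
  obtain ⟨m, hm⟩ := h
  exact ⟨m, hm.symm⟩

/-- the exponent expressing `i` from the representative of its orbit -/
def mexp (d : ℕ) [NeZero d] (κ : ℤ) (i : ZMod d) : ℕ := (exists_pow (κ := κ) i).choose

lemma mexp_spec (i : ZMod d) :
    (κ : ZMod d) ^ mexp d κ i * rep d κ (korbit d κ i) = i :=
  (exists_pow (κ := κ) i).choose_spec

end S12

open S12 in
/-- the complex dimension of `𝒱(a,b,c,κ)` equals the number of
orientable `⟨κ⟩`-orbits for the triple `(a,b,c)`. -/
theorem stmt12 (d : ℕ) [NeZero d] (hd : 1 ≤ d) (a b c κ : ℤ)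
    (hκ : IsCoprime κ (d : ℤ)) :
    Module.finrank ℂ (Vsub d a b c κ) =
      {Q : Set (ZMod d) |
        (∃ i : ZMod d, Q = korbit d κ i) ∧ Orientable d a b c Q}.ncard := by
  classical
  have hκ' : IsUnit ((κ : ℤ) : ZMod d) := isUnit_cast hκ
  set S : Set (Set (ZMod d)) :=
    {Q : Set (ZMod d) | (∃ i : ZMod d, Q = korbit d κ i) ∧ Orientable d a b c Q} with hS
  let ev : Vsub d a b c κ →ₗ[ℂ] (S → ℂ) :=
    { toFun := fun g Q => g.1 (rep d κ Q.1)
      map_add' := fun x y => rfl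
      map_smul' := fun r x => rfl }
  have hinj : Function.Injective ev := by
    rw [injective_iff_map_eq_zero]
    intro g hg
    apply Subtype.ext
    funext i
    have hval : ∀ Q : S, g.1 (rep d κ Q.1) = 0 := fun Q => congrFun hg Q
    show g.1 i = 0
    by_cases hor : Orientable d a b c (korbit d κ i)
    · have hQ : korbit d κ i ∈ S := ⟨⟨i, rfl⟩, hor⟩
      have h0 : g.1 (rep d κ (korbit d κ i)) = 0 := hval ⟨_, hQ⟩
      obtain ⟨m, hm⟩ := exists_pow (κ := κ) i
      rw [← hm, Vsub_iter g.2 m _, h0, mul_zero]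
    · have h1 := Vsub_iter g.2 (np κ i) i
      rw [pow_np hκ' i] at h1
      have hW : W d a b c κ (np κ i) i ≠ 1 := fun hc =>
        hor ((orientable_iff hκ' i).mpr (gw_zpow_eq_one_iff.mp hc))
      have h2 : (W d a b c κ (np κ i) i - 1) * g.1 i = 0 := by
        rw [sub_mul, one_mul, ← h1, sub_self]
      rcases mul_eq_zero.mp h2 with h3 | h3
      · exact absurd (sub_eq_zero.mp h3) hW
      · exact h3
  have hsurj : Function.Surjective ev := by
    intro h
    let gfun : ZMod d → ℂ := fun i =>
      if H : Orientable d a b c (korbit d κ i) then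
        W d a b c κ (mexp d κ i) (rep d κ (korbit d κ i)) * h ⟨korbit d κ i, ⟨i, rfl⟩, H⟩
      else 0
    have horb : ∀ i : ZMod d, korbit d κ ((κ : ZMod d) * i) = korbit d κ i := by
      intro i
      have := korbit_pow_mul hκ' 1 i
      rwa [pow_one] at this
    have hmem : gfun ∈ Vsub d a b c κ := by
      intro i
      show gfun ((κ : ZMod d) * i) = gw d ^ (F d a b c i) * gfun i
      by_cases H : Orientable d a b c (korbit d κ i)
      · have H' : Orientable d a b c (korbit d κ ((κ : ZMod d) * i)) := by
          rw [horb i]; exact H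
        have hrep' : rep d κ (korbit d κ ((κ : ZMod d) * i)) = rep d κ (korbit d κ i) :=
          congrArg (rep d κ) (horb i)
        have hsub : (⟨korbit d κ ((κ : ZMod d) * i), ⟨(κ : ZMod d) * i, rfl⟩, H'⟩ : S)
            = ⟨korbit d κ i, ⟨i, rfl⟩, H⟩ := Subtype.ext (horb i)
        have hL : gfun ((κ : ZMod d) * i)
            = W d a b c κ (mexp d κ ((κ : ZMod d) * i)) (rep d κ (korbit d κ i))
              * h ⟨korbit d κ i, ⟨i, rfl⟩, H⟩ := by
          show (if H2 : Orientable d a b c (korbit d κ ((κ : ZMod d) * i)) then _ else _) = _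
          rw [dif_pos H', hrep', hsub]
        have hR : gfun i
            = W d a b c κ (mexp d κ i) (rep d κ (korbit d κ i))
              * h ⟨korbit d κ i, ⟨i, rfl⟩, H⟩ := by
          show (if H2 : Orientable d a b c (korbit d κ i) then _ else _) = _
          rw [dif_pos H]
        rw [hL, hR]
        have hOr : Orientable d a b c (korbit d κ (rep d κ (korbit d κ i))) := by
          rw [rep_orbit]; exact H
        have he1 : (κ : ZMod d) ^ mexp d κ ((κ : ZMod d) * i) * rep d κ (korbit d κ i)
            = (κ : ZMod d) ^ (mexp d κ i + 1) * rep d κ (korbit d κ i) := by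
          have hms := mexp_spec (κ := κ) ((κ : ZMod d) * i)
          rw [hrep'] at hms
          rw [hms, pow_succ, mul_comm ((κ : ZMod d) ^ mexp d κ i) ((κ : ZMod d)),
            mul_assoc, mexp_spec (κ := κ) i]
        have hWeq := W_eq_of_eq (a := a) (b := b) (c := c) hκ' hOr he1
        rw [hWeq, W_succ, mexp_spec (κ := κ) i]
        ring
      · have H' : ¬ Orientable d a b c (korbit d κ ((κ : ZMod d) * i)) := by
          rw [horb i]; exact H
        have hL : gfun ((κ : ZMod d) * i) = 0 := by
          show (if H2 : Orientable d a b c (korbit d κ ((κ : ZMod d) * i)) then _ else _) = _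
          rw [dif_neg H']
        have hR : gfun i = 0 := by
          show (if H2 : Orientable d a b c (korbit d κ i) then _ else _) = _
          rw [dif_neg H]
        rw [hL, hR, mul_zero]
    refine ⟨⟨gfun, hmem⟩, ?_⟩
    funext Q
    obtain ⟨i₀, hi₀⟩ := Q.2.1
    have hrep : korbit d κ (rep d κ Q.1) = Q.1 := rep_spec ⟨i₀, hi₀.symm⟩
    show gfun (rep d κ Q.1) = h Q
    set r := rep d κ Q.1 with hr
    have hor : Orientable d a b c (korbit d κ r) := by
      rw [hrep]; exact Q.2.2
    have hrr : rep d κ (korbit d κ r) = r := by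
      rw [hrep, ← hr]
    have hsub : (⟨korbit d κ r, ⟨r, rfl⟩, hor⟩ : S) = Q := Subtype.ext hrep
    have hL : gfun r = W d a b c κ (mexp d κ r) r * h Q := by
      show (if H2 : Orientable d a b c (korbit d κ r) then _ else _) = _
      rw [dif_pos hor, hrr, hsub]
    rw [hL]
    have hfix : (κ : ZMod d) ^ mexp d κ r * r = (κ : ZMod d) ^ 0 * r := by
      rw [pow_zero, one_mul]
      have := mexp_spec (κ := κ) r
      rwa [hrr] at this
    rw [W_eq_of_eq hκ' hor hfix, W_zero, one_mul]
  have e : (Vsub d a b c κ) ≃ₗ[ℂ] (S → ℂ) := LinearEquiv.ofBijective ev ⟨hinj, hsurj⟩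
  haveI : Fintype S := Fintype.ofFinite _
  rw [e.finrank_eq]
  rw [Module.finrank_pi ℂ]
  rw [← Nat.card_coe_set_eq, Nat.card_eq_fintype_card]
end
end

section
/- Let d be a prime with d ≡ 3 mod 4 and let g ∈ ℂ^d be the Björck sequence: g_k = (1/√d)·e^{iφ} if the Legendre symbol (k|d) = −1, and g_k = 1/√d otherwise, where φ = arccos((1−d)/(1+d)). Then: (a) if (k,ℓ), (k',ℓ') ∈ (ℤ/dℤ)² \ {(0,0)} satisfy k·ℓ ≡ k'·ℓ' mod d, then |⟨g, M^k T^ℓ g⟩| = |⟨g, M^{k'} T^{ℓ'} g⟩|; (b) the set {|⟨g, M^k T^ℓ g⟩| : (k,ℓ) ∈ (ℤ/dℤ)²} has at most d + 1 elements. -/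
open Complex Finset

noncomputable section

namespace S16
set_option linter.unusedSectionVars false

lemma gw_prim (d : ℕ) [NeZero d] : IsPrimitiveRoot (gw d) d :=
  Complex.isPrimitiveRoot_exp d (NeZero.ne d)

lemma gw_pow_d (d : ℕ) [NeZero d] : gw d ^ d = 1 := (gw_prim d).pow_eq_one

/-- the standard additive character of `ZMod d` -/
def ψ (d : ℕ) [NeZero d] : AddChar (ZMod d) ℂ := AddChar.zmodChar d (gw_pow_d d)

lemma ψ_apply (d : ℕ) [NeZero d] (a : ZMod d) : ψ d a = gw d ^ a.val := rfl

lemma ψ_prim (d : ℕ) [NeZero d] : (ψ d).IsPrimitive :=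
  AddChar.zmodChar_primitive_of_primitive_root d (gw_prim d)

lemma conj_gw (d : ℕ) [NeZero d] : (starRingEnd ℂ) (gw d) = (gw d)⁻¹ := by
  rw [gw, ← Complex.exp_conj, ← Complex.exp_neg]
  congr 1
  simp only [map_div₀, map_mul, Complex.conj_I, Complex.conj_ofReal, map_ofNat, map_natCast]
  ring

lemma conj_ψ (d : ℕ) [NeZero d] (a : ZMod d) :
    (starRingEnd ℂ) (ψ d a) = ψ d (-a) := by
  have h1 : ψ d (-a) * ψ d a = 1 := by
    rw [← AddChar.map_add_eq_mul, neg_add_cancel, AddChar.map_zero_eq_one]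
  have h2 : (starRingEnd ℂ) (ψ d a) * ψ d a = 1 := by
    rw [ψ_apply, map_pow, conj_gw, inv_pow, inv_mul_cancel₀]
    exact pow_ne_zero _ (by rw [gw]; exact Complex.exp_ne_zero _)
  have h3 : ψ d a ≠ 0 := fun h => by simp [h] at h2
  calc (starRingEnd ℂ) (ψ d a) = (starRingEnd ℂ) (ψ d a) * (ψ d (-a) * ψ d a) := by
        rw [h1, mul_one]
    _ = ψ d (-a) * ((starRingEnd ℂ) (ψ d a) * ψ d a) := by ring
    _ = ψ d (-a) := by rw [h2, mul_one]

lemma sum_ψ (d : ℕ) [NeZero d] (k : ZMod d) :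
    ∑ n : ZMod d, ψ d (k * n) = if k = 0 then (d : ℂ) else 0 := by
  have := AddChar.sum_mulShift k (ψ_prim d)
  simp only [mul_comm] at this ⊢
  rw [this, ZMod.card]
  split <;> simp


variable (d : ℕ) [NeZero d] [hp : Fact d.Prime]

/-- the quadratic character of `ZMod d`, valued in `ℂ` -/
def χ : MulChar (ZMod d) ℂ :=
  (quadraticChar (ZMod d)).ringHomComp (Int.castRingHom ℂ)

lemma χ_apply (a : ZMod d) : χ d a = ((quadraticChar (ZMod d) a : ℤ) : ℂ) := rfl

lemma conj_χ (a : ZMod d) : (starRingEnd ℂ) (χ d a) = χ d a := by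
  rw [χ_apply]; exact map_intCast _ _

lemma χ_zero : χ d 0 = 0 := by
  rw [χ_apply, quadraticChar_zero]; simp

lemma χ_mul (a b : ZMod d) : χ d (a * b) = χ d a * χ d b := map_mul _ _ _

lemma ringChar_ne_two (h4 : d % 4 = 3) : ringChar (ZMod d) ≠ 2 := by
  rw [ZMod.ringChar_zmod_n]; omega

lemma χ_sq {a : ZMod d} (ha : a ≠ 0) : χ d a * χ d a = 1 := by
  rw [← χ_mul]
  rw [χ_apply]
  have : quadraticChar (ZMod d) (a * a) = 1 := by
    rw [← pow_two]; exact quadraticChar_sq_one' ha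
  rw [this]; simp

lemma χ_neg_one (h4 : d % 4 = 3) : χ d (-1) = -1 := by
  rw [χ_apply, quadraticChar_neg_one (ringChar_ne_two d h4), ZMod.card,
    ZMod.χ₄_nat_three_mod_four h4]
  simp

lemma χ_sum (h4 : d % 4 = 3) : ∑ a : ZMod d, χ d a = 0 := by
  have := quadraticChar_sum_zero (ringChar_ne_two d h4)
  have h : ((∑ a : ZMod d, quadraticChar (ZMod d) a : ℤ) : ℂ) = 0 := by rw [this]; simp
  rw [← h, Int.cast_sum]
  rfl

/-- the Gauss sum -/
def G : ℂ := gaussSum (χ d) (ψ d)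

lemma χ_ne_one (h4 : d % 4 = 3) : χ d ≠ 1 :=
  (MulChar.ringHomComp_ne_one_iff (RingHom.injective_int _)).mpr
    (quadraticChar_ne_one (ringChar_ne_two d h4))

lemma G_sq (h4 : d % 4 = 3) : G d ^ 2 = -(d : ℂ) := by
  rw [G, gaussSum_sq (χ_ne_one d h4) ((quadraticChar_isQuadratic (ZMod d)).comp _)
    (ψ_prim d), χ_neg_one d h4, ZMod.card]
  ring

lemma conj_G (h4 : d % 4 = 3) : (starRingEnd ℂ) (G d) = -G d := by
  have hsq : (starRingEnd ℂ) (G d) ^ 2 = G d ^ 2 := by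
    rw [← map_pow, G_sq d h4]
    simp
  have h : ((starRingEnd ℂ) (G d) - G d) * ((starRingEnd ℂ) (G d) + G d) = 0 := by
    ring_nf
    linear_combination hsq
  rcases mul_eq_zero.mp h with h' | h'
  · exfalso
    have hG : (starRingEnd ℂ) (G d) = G d := by linear_combination h'
    have him : (G d).im = 0 := (Complex.conj_eq_iff_im).mp hG
    have hre := congrArg Complex.re (G_sq d h4)
    rw [pow_two, Complex.mul_re, him] at hre
    simp at hre
    have : (0:ℝ) < d := by
      have := hp.out.pos; exact_mod_cast this
    nlinarith [sq_nonneg ((G d).re)]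
  · linear_combination h'


lemma sum_χψ (h4 : d % 4 = 3) (k : ZMod d) :
    ∑ n : ZMod d, χ d n * ψ d (-(k * n)) = χ d (-k) * G d := by
  rcases eq_or_ne k 0 with hk | hk
  · subst hk
    simp only [neg_zero, zero_mul, AddChar.map_zero_eq_one, mul_one]
    rw [χ_sum d h4, χ_zero, zero_mul]
  · have hc0 : (-k : ZMod d) ≠ 0 := neg_ne_zero.mpr hk
    have key := gaussSum_mulShift (χ d) (ψ d) (Units.mk0 (-k) hc0)
    have hLHS : gaussSum (χ d) (AddChar.mulShift (ψ d) ((Units.mk0 (-k) hc0) : ZMod d))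
        = ∑ n : ZMod d, χ d n * ψ d (-(k * n)) := by
      unfold gaussSum
      apply Finset.sum_congr rfl
      intro n _
      rw [AddChar.mulShift_apply]
      norm_num
    rw [hLHS] at key
    have key2 := congrArg (fun z => χ d (-k) * z) key
    rw [← mul_assoc] at key2
    rw [Units.val_mk0] at key2
    rw [χ_sq d hc0, one_mul] at key2
    rw [key2, G]

/-- The Jacobi-type sum `S(t) = ∑ χ(n)χ(n-1) ψ(-tn)`. -/
def Ssum (t : ZMod d) : ℂ := ∑ n : ZMod d, χ d n * χ d (n - 1) * ψ d (-(t * n))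

lemma Ssum_shift {k l : ZMod d} (hl : l ≠ 0) :
    ∑ n : ZMod d, χ d n * χ d (n - l) * ψ d (-(k * n)) = Ssum d (k * l) := by
  rw [Ssum]
  have hli : (l⁻¹ : ZMod d) ≠ 0 := inv_ne_zero hl
  apply Fintype.sum_equiv (Equiv.mulLeft₀ l⁻¹ hli)
  intro m
  simp only [Equiv.mulLeft₀_apply]
  have hll : l⁻¹ * l = 1 := inv_mul_cancel₀ hl
  have e1 : -(k * l * (l⁻¹ * m)) = -(k * m) := by
    have : k * l * (l⁻¹ * m) = (l⁻¹ * l) * (k * m) := by ring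
    rw [this, hll, one_mul]
  have e2 : l⁻¹ * m - 1 = l⁻¹ * (m - l) := by
    have : l⁻¹ * (m - l) = l⁻¹ * m - l⁻¹ * l := by ring
    rw [this, hll]
  rw [e1, e2, χ_mul, χ_mul]
  have h5 := χ_sq d hli
  linear_combination (-(χ d m * χ d (m - l) * ψ d (-(k * m)))) * h5

lemma neg_one_ne_zero' : (-1 : ZMod d) ≠ 0 := by
  have : (1 : ZMod d) ≠ 0 := one_ne_zero
  exact neg_ne_zero.mpr this

lemma Ssum_conj (t : ZMod d) :
    ψ d (-t) * (starRingEnd ℂ) (Ssum d t) = Ssum d t := by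
  rw [Ssum, map_sum, Finset.mul_sum]
  apply Fintype.sum_equiv (Equiv.subLeft (1 : ZMod d))
  intro m
  simp only [Equiv.subLeft_apply]
  rw [map_mul, map_mul, conj_χ, conj_χ, conj_ψ, neg_neg]
  have h1 : χ d (1 - m) = χ d (-1) * χ d (m - 1) := by
    rw [← χ_mul]; congr 1; ring
  have h2 : χ d (1 - m - 1) = χ d (-1) * χ d m := by
    rw [← χ_mul]; congr 1; ring
  have h3 : ψ d (-(t * (1 - m))) = ψ d (-t) * ψ d (t * m) := by
    rw [← AddChar.map_add_eq_mul]; congr 1; ring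
  rw [h1, h2, h3]
  have h5 := χ_sq d (neg_one_ne_zero' d)
  linear_combination (-(ψ d (-t) * (χ d m * χ d (m - 1) * ψ d (t * m)))) * h5

lemma Ssum_zero (h4 : d % 4 = 3) : Ssum d 0 = -1 := by
  have key : Ssum d 0 = ∑ m : ZMod d, (χ d m - if m = 1 then 1 else 0) := by
    rw [Ssum]
    apply Fintype.sum_equiv
      ⟨fun m => 1 - m⁻¹, fun n => (1 - n)⁻¹, fun m => by simp, fun n => by simp⟩
    intro m
    simp only [Equiv.coe_fn_mk]
    rw [zero_mul, neg_zero, AddChar.map_zero_eq_one, mul_one]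
    rcases eq_or_ne m 0 with hm | hm
    · subst hm
      simp [χ_zero]
    · have hmi : (m⁻¹ : ZMod d) ≠ 0 := inv_ne_zero hm
      have hcond : ¬ ((1 - m⁻¹ : ZMod d) = 1) := by
        intro h
        apply hmi
        linear_combination -h
      rw [if_neg hcond, sub_zero]
      have harg : m - 1 = m * (1 - m⁻¹) := by
        have : m * (1 - m⁻¹) = m - m * m⁻¹ := by ring
        rw [this, mul_inv_cancel₀ hm]
      rw [harg, χ_mul]
      have h5 := χ_sq d hm
      linear_combination (χ d (1 - m⁻¹)) * h5
  rw [key, Finset.sum_sub_distrib, χ_sum d h4, Finset.sum_ite_eq' Finset.univ (1 : ZMod d)]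
  simp

/-- the `±1` phase function of the Björck sequence -/
def η (n : ZMod d) : ℂ := if legendreSym d (n.val : ℤ) = -1 then -1 else 1

def sC : ℂ := ((Real.sqrt d : ℝ) : ℂ)

def A : ℂ := (1 + sC d * Complex.I) / (1 + d)

def B : ℂ := ((d : ℂ) - sC d * Complex.I) / (1 + d)

lemma hdR : (0 : ℝ) < d := by exact_mod_cast hp.out.pos

lemma hs_sq : sC d ^ 2 = (d : ℂ) := by
  rw [sC, ← Complex.ofReal_pow, Real.sq_sqrt (le_of_lt (hdR d))]
  simp

lemma conj_sC : (starRingEnd ℂ) (sC d) = sC d := Complex.conj_ofReal _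

lemma h1d : (1 : ℂ) + d ≠ 0 := by
  have : ((1 + d : ℝ) : ℂ) ≠ 0 := by
    rw [Complex.ofReal_ne_zero]
    have := hdR d
    positivity
  push_cast at this
  exact this

lemma hsne : sC d ≠ 0 := by
  rw [sC, Complex.ofReal_ne_zero]
  have := hdR d
  positivity

lemma hdC : (d : ℂ) ≠ 0 := Nat.cast_ne_zero.mpr (NeZero.ne d)

lemma conj_A : (starRingEnd ℂ) (A d) = (1 - sC d * Complex.I) / (1 + d) := by
  rw [A, map_div₀, map_add, map_one, map_mul, conj_sC, Complex.conj_I, map_add, map_one,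
    map_natCast]
  ring

lemma conj_B : (starRingEnd ℂ) (B d) = ((d : ℂ) + sC d * Complex.I) / (1 + d) := by
  rw [B, map_div₀, map_sub, map_natCast, map_mul, conj_sC, Complex.conj_I, map_add, map_one,
    map_natCast]
  ring

lemma div_helper (u v : ℂ) : (1 + (d:ℂ)) * (u / (1 + d) * (v / (1 + d))) = u * v / (1 + d) := by
  field_simp [h1d d]

lemma hAA : (1 + (d:ℂ)) * (A d * (starRingEnd ℂ) (A d)) = 1 := by
  rw [conj_A, A, div_helper, div_eq_one_iff_eq (h1d d)]
  linear_combination (-(Complex.I ^ 2)) * hs_sq d + (-(d:ℂ)) * Complex.I_sq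

lemma hAB : (1 + (d:ℂ)) * (A d * (starRingEnd ℂ) (B d)) = sC d * Complex.I := by
  rw [conj_B, A, div_helper, div_eq_iff (h1d d)]
  linear_combination (Complex.I ^ 2) * hs_sq d + (d:ℂ) * Complex.I_sq

lemma hBA : (1 + (d:ℂ)) * (B d * (starRingEnd ℂ) (A d)) = -(sC d * Complex.I) := by
  rw [conj_A, B, div_helper, div_eq_iff (h1d d)]
  linear_combination (Complex.I ^ 2) * hs_sq d + (d:ℂ) * Complex.I_sq

lemma hBB : (1 + (d:ℂ)) * (B d * (starRingEnd ℂ) (B d)) = (d : ℂ) := by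
  rw [conj_B, B, div_helper, div_eq_iff (h1d d)]
  linear_combination (-(Complex.I ^ 2)) * hs_sq d + (-(d:ℂ)) * Complex.I_sq

lemma η_eq (n : ZMod d) : η d n = χ d n + (if n = 0 then 1 else 0) := by
  rcases eq_or_ne n 0 with hn | hn
  · subst hn
    rw [if_pos rfl, χ_zero, η]
    have : legendreSym d (((0 : ZMod d).val : ℤ)) = 0 := by
      rw [ZMod.val_zero]
      exact_mod_cast legendreSym.at_zero d
    rw [this]
    norm_num
  · rw [if_neg hn, add_zero, η]
    have hcast : ((n.val : ℤ) : ZMod d) = n := by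
      push_cast
      exact ZMod.natCast_zmod_val n
    have hleg : legendreSym d (n.val : ℤ) = quadraticChar (ZMod d) n := by
      rw [legendreSym, hcast]
    rcases quadraticChar_dichotomy hn with h | h
    · rw [hleg, h, if_neg (by norm_num), χ_apply, h]
      simp
    · rw [hleg, h, if_pos rfl, χ_apply, h]
      simp

lemma conj_η (n : ZMod d) : (starRingEnd ℂ) (η d n) = η d n := by
  rw [η]
  split <;> simp

lemma exp_phi :
    Complex.exp (Complex.I * ((Real.arccos ((1 - (d : ℝ)) / (1 + (d : ℝ))) : ℝ) : ℂ)) =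
      (1 - (d : ℂ) + 2 * sC d * Complex.I) / (1 + d) := by
  have h1d' : (0:ℝ) < 1 + d := by have := hdR d; linarith
  set x : ℝ := (1 - d) / (1 + d) with hx
  have hx1 : -1 ≤ x := by
    rw [hx, le_div_iff₀ h1d']
    have := hdR d
    nlinarith
  have hx2 : x ≤ 1 := by
    rw [hx, div_le_one h1d']
    linarith
  rw [mul_comm, Complex.exp_mul_I, ← Complex.ofReal_cos, ← Complex.ofReal_sin,
    Real.cos_arccos hx1 hx2, Real.sin_arccos]
  have hsd : Real.sqrt d ^ 2 = (d:ℝ) := Real.sq_sqrt (le_of_lt (hdR d))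
  have hsqrt : Real.sqrt (1 - x ^ 2) = 2 * Real.sqrt d / (1 + d) := by
    have h2 : (2 * Real.sqrt d / (1 + d)) ^ 2 = 4 * d / (1 + d) ^ 2 := by
      rw [div_pow, mul_pow, hsd]
      norm_num
    have h3 : 1 - x ^ 2 = 4 * d / (1 + d) ^ 2 := by
      rw [hx]
      field_simp
      ring
    rw [h3, ← h2, Real.sqrt_sq (by positivity)]
  rw [hsqrt, hx, sC]
  push_cast
  field_simp

lemma η_sq (n : ZMod d) : η d n * η d n = 1 := by
  rw [η]
  split <;> norm_num

lemma hss : sC d * sC d = (d : ℂ) := by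
  have := hs_sq d
  rwa [pow_two] at this

lemma hψkn (k n : ZMod d) :
    (starRingEnd ℂ) (gw d ^ (k.val * n.val)) = ψ d (-(k * n)) := by
  rw [← conj_ψ]
  congr 1
  rw [ψ_apply, ZMod.val_mul]
  exact pow_eq_pow_mod _ (gw_pow_d d)

lemma inn_expand (g : ZMod d → ℂ) (hg : ∀ n, g n = (sC d)⁻¹ * (A d + B d * η d n))
    (k l : ZMod d) :
    (d : ℂ) * inn d g (modT d k l g) =
      ∑ n : ZMod d, (A d + B d * η d n) *
        ((starRingEnd ℂ) (A d) + (starRingEnd ℂ) (B d) * η d (n - l)) * ψ d (-(k * n)) := by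
  rw [inn, Finset.mul_sum]
  apply Finset.sum_congr rfl
  intro n _
  rw [modT, hg n, hg (n - l), map_mul, map_mul, map_inv₀, conj_sC, map_add, map_mul, conj_η,
    hψkn]
  have h : (d : ℂ) * ((sC d)⁻¹ * (sC d)⁻¹) = 1 := by
    rw [← mul_inv, hss]
    exact mul_inv_cancel₀ (hdC d)
  linear_combination ((A d + B d * η d n) *
    ((starRingEnd ℂ) (A d) + (starRingEnd ℂ) (B d) * η d (n - l)) * ψ d (-(k * n))) * h

lemma sum_ηψ (k : ZMod d) (h4 : d % 4 = 3) :
    ∑ n : ZMod d, η d n * ψ d (-(k * n)) = χ d (-k) * G d + 1 := by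
  have : ∀ n : ZMod d, η d n * ψ d (-(k * n)) =
      χ d n * ψ d (-(k * n)) + (if n = 0 then ψ d (-(k * n)) else 0) := by
    intro n
    rw [η_eq, add_mul, ite_mul, one_mul, zero_mul]
  rw [Finset.sum_congr rfl (fun n _ => this n), Finset.sum_add_distrib,
    Finset.sum_ite_eq' Finset.univ (0 : ZMod d), sum_χψ d h4]
  simp

lemma sum_ηψ_shift (k l : ZMod d) (h4 : d % 4 = 3) :
    ∑ n : ZMod d, η d (n - l) * ψ d (-(k * n)) =
      ψ d (-(k * l)) * (χ d (-k) * G d + 1) := by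
  have step : ∑ n : ZMod d, η d (n - l) * ψ d (-(k * n)) =
      ∑ m : ZMod d, ψ d (-(k * l)) * (η d m * ψ d (-(k * m))) := by
    apply Fintype.sum_equiv (Equiv.subRight l)
    intro n
    simp only [Equiv.subRight_apply]
    rw [← mul_assoc, mul_comm (ψ d (-(k*l))) (η d (n - l)), mul_assoc,
      ← AddChar.map_add_eq_mul]
    congr 2
    ring
  rw [step, ← Finset.mul_sum, sum_ηψ d k h4]

lemma sum_ηηψ {k l : ZMod d} (hl : l ≠ 0) (h4 : d % 4 = 3) :
    ∑ n : ZMod d, η d n * η d (n - l) * ψ d (-(k * n)) =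
      Ssum d (k * l) + χ d (-l) + χ d l * ψ d (-(k * l)) := by
  have expand : ∀ n : ZMod d, η d n * η d (n - l) * ψ d (-(k * n)) =
      χ d n * χ d (n - l) * ψ d (-(k * n))
      + (if n = l then χ d n * ψ d (-(k * n)) else 0)
      + (if n = 0 then χ d (n - l) * ψ d (-(k * n)) else 0)
      + (if n = 0 then (if n = l then ψ d (-(k * n)) else 0) else 0) := by
    intro n
    rw [η_eq, η_eq]
    have hsub : ((n - l = 0) ↔ (n = l)) := sub_eq_zero
    rw [if_congr hsub rfl rfl]
    rcases eq_or_ne n 0 with h0 | h0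
    · subst h0
      have hne : ¬ ((0 : ZMod d) = l) := fun h => hl h.symm
      rw [if_pos rfl, if_pos rfl, if_neg hne, if_neg hne, χ_zero]
      simp [hne]
    · rcases eq_or_ne n l with h1 | h1
      · subst h1
        rw [if_neg h0, if_pos rfl, if_pos rfl, if_neg h0, sub_self, χ_zero]
        simp [h0]
      · rw [if_neg h0, if_neg h1, if_neg h1, if_neg h0]
        simp [h0]
  rw [Finset.sum_congr rfl (fun n _ => expand n)]
  rw [Finset.sum_add_distrib, Finset.sum_add_distrib, Finset.sum_add_distrib]
  rw [Finset.sum_ite_eq' Finset.univ (l : ZMod d), Finset.sum_ite_eq' Finset.univ (0 : ZMod d),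
    Finset.sum_ite_eq' Finset.univ (0 : ZMod d)]
  rw [Ssum_shift d hl]
  simp only [mem_univ, if_true, zero_sub, if_neg (Ne.symm hl)]
  rw [mul_zero, neg_zero, AddChar.map_zero_eq_one, mul_one]
  ring

/-- The main formula. -/
lemma main_formula (h4 : d % 4 = 3) (g : ZMod d → ℂ)
    (hg : ∀ n, g n = (sC d)⁻¹ * (A d + B d * η d n)) {k l : ZMod d} (hl : l ≠ 0) :
    (d : ℂ) * (1 + d) * inn d g (modT d k l g) =
      (if k = 0 then (d : ℂ) else 0)
      + (ψ d (-(k * l)) - 1) *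
          (sC d * Complex.I * (1 + χ d (-k) * G d) + d * χ d l)
      + d * Ssum d (k * l) := by
  have hexp := inn_expand d g hg k l
  have hsplit : ∑ n : ZMod d, (A d + B d * η d n) *
        ((starRingEnd ℂ) (A d) + (starRingEnd ℂ) (B d) * η d (n - l)) * ψ d (-(k * n)) =
      A d * (starRingEnd ℂ) (A d) * (∑ n : ZMod d, ψ d (-(k * n)))
      + A d * (starRingEnd ℂ) (B d) * (∑ n : ZMod d, η d (n - l) * ψ d (-(k * n)))
      + B d * (starRingEnd ℂ) (A d) * (∑ n : ZMod d, η d n * ψ d (-(k * n)))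
      + B d * (starRingEnd ℂ) (B d) * (∑ n : ZMod d, η d n * η d (n - l) * ψ d (-(k * n))) := by
    rw [Finset.mul_sum, Finset.mul_sum, Finset.mul_sum, Finset.mul_sum,
      ← Finset.sum_add_distrib, ← Finset.sum_add_distrib, ← Finset.sum_add_distrib]
    apply Finset.sum_congr rfl
    intro n _
    ring
  have hs1 : ∑ n : ZMod d, ψ d (-(k * n)) = if k = 0 then (d:ℂ) else 0 := by
    have h : ∀ n : ZMod d, -(k * n) = (-k) * n := fun n => by ring
    rw [Finset.sum_congr rfl (fun n _ => by rw [h n]), sum_ψ d (-k)]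
    simp [neg_eq_zero]
  rw [hsplit, hs1, sum_ηψ d k h4, sum_ηψ_shift d k l h4, sum_ηηψ d hl h4] at hexp
  have hchi : χ d (-l) = - χ d l := by
    have h : (-l : ZMod d) = (-1) * l := by ring
    rw [h, χ_mul, χ_neg_one d h4]
    ring
  have key : (d : ℂ) * (1 + d) * inn d g (modT d k l g) =
      (1 + d) * ((d : ℂ) * inn d g (modT d k l g)) := by ring
  rw [key, hexp, hchi]
  have e1 := hAA d
  have e2 := hAB d
  have e3 := hBA d
  have e4 := hBB d
  linear_combination (if k = 0 then (d:ℂ) else 0) * e1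
    + (ψ d (-(k*l)) * (χ d (-k) * G d + 1)) * e2
    + (χ d (-k) * G d + 1) * e3
    + (Ssum d (k*l) + -(χ d l) + χ d l * ψ d (-(k*l))) * e4

lemma g_form (g : ZMod d → ℂ)
    (hgdef : ∀ n : ZMod d,
      g n = if legendreSym d (n.val : ℤ) = -1 then
          (1 / ((Real.sqrt d : ℝ) : ℂ)) *
            Complex.exp (Complex.I *
              ((Real.arccos ((1 - (d : ℝ)) / (1 + (d : ℝ))) : ℝ) : ℂ))
        else 1 / ((Real.sqrt d : ℝ) : ℂ)) :
    ∀ n, g n = (sC d)⁻¹ * (A d + B d * η d n) := by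
  intro n
  rw [hgdef n, η]
  split_ifs with h
  · rw [exp_phi d, one_div]
    have hAB1 : A d + B d * (-1) = (1 - (d:ℂ) + 2 * sC d * Complex.I) / (1 + d) := by
      rw [A, B]
      ring
    rw [hAB1, sC]
  · have hAB2 : A d + B d * 1 = 1 := by
      rw [mul_one, A, B, ← add_div, div_eq_one_iff_eq (h1d d)]
      ring
    rw [hAB2, mul_one, one_div, sC]

lemma inn_l0 (g : ZMod d → ℂ) (hg : ∀ n, g n = (sC d)⁻¹ * (A d + B d * η d n))
    {k : ZMod d} (hk : k ≠ 0) : inn d g (modT d k 0 g) = 0 := by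
  have hexp := inn_expand d g hg k 0
  have hterm : ∀ n ∈ Finset.univ, (A d + B d * η d n) *
      ((starRingEnd ℂ) (A d) + (starRingEnd ℂ) (B d) * η d (n - 0)) * ψ d (-(k * n)) =
      ψ d (-(k * n)) := by
    intro n _
    rw [sub_zero]
    apply mul_left_cancel₀ (h1d d)
    have h2 := η_sq d n
    have e1 := hAA d
    have e2 := hAB d
    have e3 := hBA d
    have e4 := hBB d
    linear_combination (ψ d (-(k * n))) * e1 + (η d n * ψ d (-(k * n))) * e2
      + (η d n * ψ d (-(k * n))) * e3 + (η d n * η d n * ψ d (-(k * n))) * e4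
      + ((d:ℂ) * ψ d (-(k * n))) * h2
  rw [Finset.sum_congr rfl hterm] at hexp
  have hs1 : ∑ n : ZMod d, ψ d (-(k * n)) = 0 := by
    have h : ∀ n : ZMod d, -(k * n) = (-k) * n := fun n => by ring
    rw [Finset.sum_congr rfl (fun n _ => by rw [h n]), sum_ψ d (-k),
      if_neg (neg_ne_zero.mpr hk)]
  rw [hs1] at hexp
  exact (mul_eq_zero.mp hexp).resolve_left (hdC d)

lemma inn_kl0 (h4 : d % 4 = 3) (g : ZMod d → ℂ)
    (hg : ∀ n, g n = (sC d)⁻¹ * (A d + B d * η d n))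
    {k l : ZMod d} (hne : ¬(k = 0 ∧ l = 0)) (h0 : k * l = 0) :
    inn d g (modT d k l g) = 0 := by
  rcases eq_or_ne l 0 with hl | hl
  · subst hl
    have hk : k ≠ 0 := fun h => hne ⟨h, rfl⟩
    exact inn_l0 d g hg hk
  · have hk : k = 0 := (mul_eq_zero.mp h0).resolve_right hl
    subst hk
    have hmf := main_formula d h4 g hg hl (k := 0)
    rw [zero_mul, neg_zero, AddChar.map_zero_eq_one, Ssum_zero d h4, if_pos rfl] at hmf
    have hz : (d:ℂ) * (1 + d) * inn d g (modT d 0 l g) = 0 := by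
      rw [hmf]; ring
    have hne2 : (d:ℂ) * (1 + d) ≠ 0 := mul_ne_zero (hdC d) (h1d d)
    exact (mul_eq_zero.mp hz).resolve_left hne2

lemma parta (h4 : d % 4 = 3) (g : ZMod d → ℂ)
    (hg : ∀ n, g n = (sC d)⁻¹ * (A d + B d * η d n)) :
    ∀ k l k' l' : ZMod d, (k, l) ≠ (0, 0) → (k', l') ≠ (0, 0) →
      k * l = k' * l' →
      ‖inn d g (modT d k l g)‖ =
        ‖inn d g (modT d k' l' g)‖ := by
  intro k l k' l' h1 h2 hml
  have hpair : ∀ a b : ZMod d, ((a, b) ≠ ((0 : ZMod d), (0 : ZMod d))) →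
      ¬(a = 0 ∧ b = 0) := by
    rintro a b hab ⟨hx, hy⟩
    exact hab (by rw [hx, hy])
  rcases eq_or_ne (k * l) 0 with ht | ht
  · rw [inn_kl0 d h4 g hg (hpair _ _ h1) ht,
      inn_kl0 d h4 g hg (hpair _ _ h2) (hml ▸ ht)]
  · have hk : k ≠ 0 := left_ne_zero_of_mul ht
    have hl : l ≠ 0 := right_ne_zero_of_mul ht
    have ht' : k' * l' ≠ 0 := hml ▸ ht
    have hk' : k' ≠ 0 := left_ne_zero_of_mul ht'
    have hl' : l' ≠ 0 := right_ne_zero_of_mul ht'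
    have m1 := main_formula d h4 g hg hl (k := k)
    have m2 := main_formula d h4 g hg hl' (k := k')
    rw [← hml] at m2
    rw [if_neg hk] at m1
    rw [if_neg hk'] at m2
    set t := k * l with hti
    set u := ψ d (-t) with hui
    set v := ψ d t with hvi
    set Sv := Ssum d t with hSi
    set X := (u - 1) * (sC d * Complex.I) + (d:ℂ) * Sv with hX
    set Y := u - 1 with hY
    set c := sC d * Complex.I * (χ d (-k) * G d) + (d:ℂ) * χ d l with hc
    set c' := sC d * Complex.I * (χ d (-k') * G d) + (d:ℂ) * χ d l' with hc'
    have hm1 : (d:ℂ) * (1 + d) * inn d g (modT d k l g) = X + Y * c := by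
      rw [m1, hX, hY, hc]; ring
    have hm2 : (d:ℂ) * (1 + d) * inn d g (modT d k' l' g) = X + Y * c' := by
      rw [m2, hX, hY, hc']; ring
    -- conjugation facts
    have hvu : (starRingEnd ℂ) u = v := by rw [hui, conj_ψ, neg_neg]
    have h5 : u * (starRingEnd ℂ) Sv = Sv := Ssum_conj d t
    have h6 : v * Sv = (starRingEnd ℂ) Sv := by
      have := congrArg (starRingEnd ℂ) h5
      rw [map_mul, hvu, Complex.conj_conj] at this
      linear_combination this
    have hconjX : (starRingEnd ℂ) X =
        (v - 1) * (-(sC d * Complex.I)) + (d:ℂ) * (starRingEnd ℂ) Sv := by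
      rw [hX, map_add, map_mul, map_sub, map_one, hvu, map_mul, conj_sC, Complex.conj_I,
        map_mul, map_natCast]
      ring
    have hconjY : (starRingEnd ℂ) Y = v - 1 := by
      rw [hY, map_sub, map_one, hvu]
    have hconjc : (starRingEnd ℂ) c = c := by
      rw [hc, map_add, map_mul, map_mul, conj_sC, Complex.conj_I, map_mul, conj_χ,
        conj_G d h4, map_mul, map_natCast, conj_χ]
      ring
    have hconjc' : (starRingEnd ℂ) c' = c' := by
      rw [hc', map_add, map_mul, map_mul, conj_sC, Complex.conj_I, map_mul, conj_χ,
        conj_G d h4, map_mul, map_natCast, conj_χ]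
      ring
    have hA1 : χ d (-k) * χ d l = χ d (-t) := by
      rw [← χ_mul]; congr 1; rw [hti]; ring
    have hA1' : χ d (-k') * χ d l' = χ d (-t) := by
      rw [← χ_mul]
      have : -k' * l' = -t := by linear_combination hml
      rw [this]
    have q1 : χ d (-k) * χ d (-k) = 1 := χ_sq d (neg_ne_zero.mpr hk)
    have q1' : χ d (-k') * χ d (-k') = 1 := χ_sq d (neg_ne_zero.mpr hk')
    have q2 : χ d l * χ d l = 1 := χ_sq d hl
    have q2' : χ d l' * χ d l' = 1 := χ_sq d hl'
    have hcc' : c * c = c' * c' := by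
      rw [hc, hc']
      linear_combination ((sC d * Complex.I * G d)^2) * q1
        - ((sC d * Complex.I * G d)^2) * q1'
        + (2 * (d:ℂ) * (sC d * Complex.I * G d)) * hA1
        - (2 * (d:ℂ) * (sC d * Complex.I * G d)) * hA1'
        + ((d:ℂ)^2) * q2 - ((d:ℂ)^2) * q2'
    have E0 : X * (v - 1) + Y * ((v - 1) * (-(sC d * Complex.I))
        + (d:ℂ) * (starRingEnd ℂ) Sv) = 0 := by
      rw [hX, hY]
      linear_combination (d:ℂ) * h5 + (d:ℂ) * h6
    have hQconj : (starRingEnd ℂ) (X + Y * c) =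
        ((v - 1) * (-(sC d * Complex.I)) + (d:ℂ) * (starRingEnd ℂ) Sv) + (v - 1) * c := by
      rw [map_add, map_mul, hconjX, hconjY, hconjc]
    have hQconj' : (starRingEnd ℂ) (X + Y * c') =
        ((v - 1) * (-(sC d * Complex.I)) + (d:ℂ) * (starRingEnd ℂ) Sv) + (v - 1) * c' := by
      rw [map_add, map_mul, hconjX, hconjY, hconjc']
    have key : (X + Y * c) * (starRingEnd ℂ) (X + Y * c) =
        (X + Y * c') * (starRingEnd ℂ) (X + Y * c') := by
      rw [hQconj, hQconj']
      linear_combination (c - c') * E0 + (Y * (v - 1)) * hcc'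
    have hnormSq : Complex.normSq (X + Y * c) = Complex.normSq (X + Y * c') := by
      have := key
      rw [Complex.mul_conj, Complex.mul_conj] at this
      exact_mod_cast this
    have habsQ : ‖X + Y * c‖ = ‖X + Y * c'‖ := by
      rw [Complex.norm_def, Complex.norm_def, hnormSq]
    have hKne : ‖(d:ℂ) * (1 + d)‖ ≠ 0 := by
      rw [norm_ne_zero_iff]
      exact mul_ne_zero (hdC d) (h1d d)
    apply mul_left_cancel₀ hKne
    rw [← norm_mul, ← norm_mul, hm1, hm2, habsQ]

end S16


/-- let `d ≡ 3 mod 4` be prime and let `g` be the Björck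
sequence: `g_k = (1/√d)·e^{iφ}` if the Legendre symbol `(k|d) = -1` and
`g_k = 1/√d` otherwise, where `φ = arccos((1-d)/(1+d))`. Then (a) if
`(k,ℓ), (k',ℓ') ≠ (0,0)` and `kℓ = k'ℓ'` in `ℤ/dℤ` then
`|⟨g, M^k T^ℓ g⟩| = |⟨g, M^{k'} T^{ℓ'} g⟩|`, and (b) the set of values
`|⟨g, M^k T^ℓ g⟩|` has at most `d+1` elements. -/
theorem stmt16 (d : ℕ) [NeZero d] [hp : Fact d.Prime] (h4 : d % 4 = 3)
    (g : ZMod d → ℂ)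
    (hgdef : ∀ n : ZMod d,
      g n = if legendreSym d (n.val : ℤ) = -1 then
          (1 / ((Real.sqrt d : ℝ) : ℂ)) *
            Complex.exp (Complex.I *
              ((Real.arccos ((1 - (d : ℝ)) / (1 + (d : ℝ))) : ℝ) : ℂ))
        else 1 / ((Real.sqrt d : ℝ) : ℂ)) :
    (∀ k l k' l' : ZMod d, (k, l) ≠ (0, 0) → (k', l') ≠ (0, 0) →
      k * l = k' * l' →
      ‖inn d g (modT d k l g)‖ =
        ‖inn d g (modT d k' l' g)‖) ∧
    {x : ℝ | ∃ k l : ZMod d, x = ‖inn d g (modT d k l g)‖}.ncard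
      ≤ d + 1 := by
  have hg := S16.g_form d g hgdef
  constructor
  · exact S16.parta d h4 g hg
  · set v0 := ‖inn d g (modT d 0 0 g)‖ with hv0
    set w : ZMod d → ℝ := fun t => ‖inn d g (modT d 1 t g)‖ with hw
    have hsub : {x : ℝ | ∃ k l : ZMod d, x = ‖inn d g (modT d k l g)‖} ⊆
        insert v0 (Set.range w) := by
      rintro x ⟨k, l, rfl⟩
      rcases eq_or_ne (k, l) ((0 : ZMod d), (0 : ZMod d)) with hkl | hkl
      · have hk : k = 0 := congrArg Prod.fst hkl
        have hl : l = 0 := congrArg Prod.snd hkl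
        subst hk
        subst hl
        exact Set.mem_insert _ _
      · apply Set.mem_insert_iff.mpr
        right
        refine ⟨k * l, ?_⟩
        have hne1 : ((1 : ZMod d), k * l) ≠ ((0 : ZMod d), (0 : ZMod d)) := by
          intro h
          exact one_ne_zero (congrArg Prod.fst h)
        exact (S16.parta d h4 g hg k l 1 (k * l) hkl hne1 (by ring)).symm
    calc {x : ℝ | ∃ k l : ZMod d, x = ‖inn d g (modT d k l g)‖}.ncard
        ≤ (insert v0 (Set.range w)).ncard :=
          Set.ncard_le_ncard hsub ((Set.finite_range w).insert v0)
      _ ≤ (Set.range w).ncard + 1 := Set.ncard_insert_le _ _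
      _ ≤ d + 1 := by
          have h1 : (Set.range w).ncard ≤ d := by
            rw [← Set.image_univ]
            calc (w '' Set.univ).ncard ≤ (Set.univ : Set (ZMod d)).ncard :=
                  Set.ncard_image_le Set.finite_univ
              _ = d := by rw [Set.ncard_univ, Nat.card_zmod]
          omega
end
end
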